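/- Let G be a connected graph of order n with minimum degree δ ≥ 2 and power domination number γ_p ≥ 3. Then rad_p(G) ≤ n - γ_p - max{2γ_p, γ_p + δ} + 1. -/

import Mathlib

open scoped Classical

/-- The closed neighbourhood `N[S]` of a finset of vertices. -/
noncomputable def closedNbhd {V : Type*} [Fintype V] (G : SimpleGraph V) (S : Finset V) :
    Finset V :=
  S ∪ S.biUnion fun v => G.neighborFinset v

/-- One propagation step of power domination. -/
noncomputable def pdStep {V : Type*} [Fintype V] (G : SimpleGraph V) (A : Finset V) : Finset V :=
  A ∪ closedNbhd G (A.filter fun v => (G.neighborFinset v \ A).card ≤ 1)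

/-- The monitored sets `P^i(S)`, with `P^0(S) = ∅` and `P^1(S) = N[S]`. -/
noncomputable def pdSeq {V : Type*} [Fintype V] (G : SimpleGraph V) (S : Finset V) : ℕ → Finset V
  | 0 => ∅
  | 1 => closedNbhd G S
  | (i + 2) => pdStep G (pdSeq G S (i + 1))

/-- `S` is a power dominating set of `G`. -/
def IsPDS {V : Type*} [Fintype V] (G : SimpleGraph V) (S : Finset V) : Prop :=
  ∃ i, pdSeq G S i = Finset.univ

/-- The power domination number `γ_p(G)`. -/
noncomputable def pdNum {V : Type*} [Fintype V] (G : SimpleGraph V) : ℕ :=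
  sInf {k | ∃ S : Finset V, IsPDS G S ∧ S.card = k}

/-- The propagation radius `rad_p(G, S)` of a PDS `S`. -/
noncomputable def pdRadS {V : Type*} [Fintype V] (G : SimpleGraph V) (S : Finset V) : ℕ :=
  sInf {i | pdSeq G S i = Finset.univ}

/-- The propagation radius `rad_p(G)`. -/
noncomputable def pdRad {V : Type*} [Fintype V] (G : SimpleGraph V) : ℕ :=
  sInf {r | ∃ S : Finset V, IsPDS G S ∧ S.card = pdNum G ∧ pdRadS G S = r}

/-!
Each propagation step of a PDS `S` monitors a new vertex until all of `G` is monitored, so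
`rad_p(G, S) ≤ n - |N[S]| + 1`, and it suffices to find a minimum PDS with
`|N[S]| ≥ γ_p + max (2γ_p) (γ_p + δ)`. Take one maximising `|N[S]|` among all minimum PDSs.
Exchange arguments (vertices of `S` may be replaced by vertices that monitor them, provided each
replaced vertex then has at most one unmonitored neighbour) show that every vertex of `S` has an
external private neighbour, and two unless it is isolated in `S`. Counting `S`, these private
neighbours and further neighbours inside `N[S]` gives `|N[S]| ≥ 3γ_p` and `|N[S]| ≥ 2γ_p + δ`:
whenever the count falls short, an exchange produces a smaller PDS or a minimum PDS with a larger
closed neighbourhood.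
-/

open Finset

lemma Finset.add_card_sub_one_mul_le_sum {ι : Type*} {s : Finset ι} {f : ι → ℕ} {c : ℕ} {a : ι}
    (hf : ∀ i ∈ s, c ≤ f i) (ha : a ∈ s) : f a + (s.card - 1) * c ≤ ∑ i ∈ s, f i := by
  rw [← sum_erase_add _ _ ha, add_comm (f a), ← card_erase_of_mem ha, ← smul_eq_mul]
  exact Nat.add_le_add_right (card_nsmul_le_sum _ _ _ fun i hi => hf i (mem_of_mem_erase hi)) _

lemma Finset.card_insert_sdiff_pair_lt {α : Type*} [DecidableEq α] {s : Finset α} {a b : α}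
    (ha : a ∈ s) (hb : b ∈ s) (hab : a ≠ b) (x : α) : (insert x (s \ {a, b})).card < s.card := by
  have := card_insert_le x (s \ {a, b})
  rw [card_sdiff_of_subset (insert_subset ha (singleton_subset_iff.2 hb)), card_pair hab] at this
  have := card_le_card (insert_subset ha (singleton_subset_iff.2 hb))
  rw [card_pair hab] at this
  omega

section

variable {V : Type*} [Fintype V] {G : SimpleGraph V} {S T W : Finset V} {p u v w x : V}

lemma mem_closedNbhd : x ∈ closedNbhd G S ↔ x ∈ S ∨ ∃ s ∈ S, G.Adj s x := by
  simp [closedNbhd]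

lemma closedNbhd_singleton (v : V) : closedNbhd G {v} = insert v (G.neighborFinset v) := by
  ext; simp [closedNbhd]

lemma card_closedNbhd_singleton (v : V) : (closedNbhd G {v}).card = G.degree v + 1 := by
  rw [closedNbhd_singleton, card_insert_of_notMem (by simp), G.card_neighborFinset_eq_degree]

lemma subset_closedNbhd (S : Finset V) : S ⊆ closedNbhd G S :=
  subset_union_left

lemma closedNbhd_mono (h : S ⊆ T) : closedNbhd G S ⊆ closedNbhd G T :=
  union_subset_union h (biUnion_subset_biUnion_of_subset_left _ h)

lemma closedNbhd_union (S T : Finset V) :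
    closedNbhd G (S ∪ T) = closedNbhd G S ∪ closedNbhd G T := by
  ext; simp only [mem_union, mem_closedNbhd]; grind

lemma closedNbhd_insert (v : V) (S : Finset V) :
    closedNbhd G (insert v S) = closedNbhd G {v} ∪ closedNbhd G S := by
  rw [insert_eq, closedNbhd_union]

lemma closedNbhd_singleton_subset (hv : v ∈ S) : closedNbhd G {v} ⊆ closedNbhd G S :=
  closedNbhd_mono (singleton_subset_iff.2 hv)

lemma neighborFinset_subset_closedNbhd (hv : v ∈ S) : G.neighborFinset v ⊆ closedNbhd G S :=
  (closedNbhd_singleton v ▸ subset_insert _ _).trans (closedNbhd_singleton_subset hv)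

lemma mem_closedNbhd_of_adj (hv : v ∈ S) (h : G.Adj v u) : u ∈ closedNbhd G S :=
  neighborFinset_subset_closedNbhd hv ((G.mem_neighborFinset _ _).2 h)

lemma closedNbhd_subset_sdiff_union (S W : Finset V) :
    closedNbhd G S ⊆ closedNbhd G (S \ W) ∪ closedNbhd G W := by
  rw [← closedNbhd_union]
  exact closedNbhd_mono (by simp)

lemma closedNbhd_eq_union_erase (hv : v ∈ S) :
    closedNbhd G S = closedNbhd G {v} ∪ closedNbhd G (S.erase v) := by
  conv_lhs => rw [← insert_erase hv]
  exact closedNbhd_insert v _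

lemma subset_pdStep (A : Finset V) : A ⊆ pdStep G A :=
  subset_union_left

lemma pdStep_mono {A B : Finset V} (h : A ⊆ B) : pdStep G A ⊆ pdStep G B :=
  union_subset_union h <| closedNbhd_mono fun v hv => by
    rw [mem_filter] at hv ⊢
    exact ⟨h hv.1, (card_le_card (sdiff_subset_sdiff le_rfl h)).trans hv.2⟩

lemma closedNbhd_subset_pdStep {A : Finset V}
    (hW : ∀ w ∈ W, w ∈ A ∧ (G.neighborFinset w \ A).card ≤ 1) :
    closedNbhd G W ⊆ pdStep G A :=
  (closedNbhd_mono fun w hw => mem_filter.2 (hW w hw)).trans subset_union_right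

lemma pdSeq_add_two (S : Finset V) (i : ℕ) :
    pdSeq G S (i + 2) = pdStep G (pdSeq G S (i + 1)) := rfl

lemma pdSeq_succ (S : Finset V) {i : ℕ} (hi : 1 ≤ i) :
    pdSeq G S (i + 1) = pdStep G (pdSeq G S i) := by
  obtain ⟨j, rfl⟩ := Nat.exists_eq_add_of_le' hi
  rfl

lemma pdSeq_mono (S : Finset V) : Monotone (pdSeq G S) := by
  refine monotone_nat_of_le_succ fun i => ?_
  rcases i with _ | i
  · exact empty_subset _
  · exact pdSeq_succ S (Nat.le_add_left 1 i) ▸ subset_pdStep _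

lemma IsPDS.pdSeq_eq_univ_of_succ_eq (hS : IsPDS G S) {i : ℕ}
    (h : pdSeq G S (i + 1) = pdSeq G S i) (hi : 1 ≤ i) : pdSeq G S i = univ := by
  obtain ⟨k, hk⟩ := hS
  have hstall : ∀ j, pdSeq G S (i + j) = pdSeq G S i := by
    intro j
    induction j with
    | zero => rfl
    | succ j ih => rw [← add_assoc, pdSeq_succ S (by omega), ih, ← pdSeq_succ S hi, h]
  rw [← hstall k, eq_univ_iff_forall]
  exact fun x => pdSeq_mono S (by omega : k ≤ i + k) (hk ▸ mem_univ x)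

lemma IsPDS.min_card_le_card_pdSeq (hS : IsPDS G S) (k : ℕ) :
    min (Fintype.card V) ((closedNbhd G S).card + k) ≤ (pdSeq G S (k + 1)).card := by
  induction k with
  | zero => exact min_le_right _ _
  | succ k ih =>
    by_cases hstall : pdSeq G S (k + 1 + 1) = pdSeq G S (k + 1)
    · rw [hstall, hS.pdSeq_eq_univ_of_succ_eq hstall (by omega), card_univ]
      exact min_le_left _ _
    · have := card_lt_card ((pdSeq_mono S (by omega : k + 1 ≤ k + 1 + 1)).lt_of_ne' hstall)
      omega

lemma IsPDS.pdRadS_le (hS : IsPDS G S) :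
    pdRadS G S ≤ Fintype.card V - (closedNbhd G S).card + 1 := by
  refine Nat.sInf_le (eq_univ_of_card _ (le_antisymm (card_le_univ _) ?_))
  have := hS.min_card_le_card_pdSeq (Fintype.card V - (closedNbhd G S).card)
  have := card_le_univ (closedNbhd G S)
  omega

lemma pdRad_le_pdRadS (hS : IsPDS G S) (hcard : S.card = pdNum G) : pdRad G ≤ pdRadS G S :=
  Nat.sInf_le ⟨S, hS, hcard, rfl⟩

lemma IsPDS.of_closedNbhd_subset_pdSeq_two (hS : IsPDS G S)
    (h : closedNbhd G S ⊆ pdSeq G T 2) : IsPDS G T := by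
  obtain ⟨i, hi⟩ := hS
  have hle : ∀ j, pdSeq G S (j + 1) ⊆ pdSeq G T (j + 2) := by
    intro j
    induction j with
    | zero => exact h
    | succ j ih => rw [pdSeq_succ S (by omega), pdSeq_add_two]; exact pdStep_mono ih
  refine ⟨i + 2, eq_univ_of_forall fun x => hle i (pdSeq_mono S (Nat.le_succ i) ?_)⟩
  exact hi ▸ mem_univ x

theorem IsPDS.of_exchange (hS : IsPDS G S) (hST : S \ W ⊆ T)
    (hW : ∀ w ∈ W, w ∈ closedNbhd G T ∧ (G.neighborFinset w \ closedNbhd G T).card ≤ 1) :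
    IsPDS G T := by
  refine hS.of_closedNbhd_subset_pdSeq_two ((closedNbhd_subset_sdiff_union S W).trans ?_)
  exact union_subset ((closedNbhd_mono hST).trans (subset_pdStep _)) (closedNbhd_subset_pdStep hW)

structure IsMinPDS (G : SimpleGraph V) (S : Finset V) : Prop where
  isPDS : IsPDS G S
  card_eq : S.card = pdNum G

structure IsMaxMinPDS (G : SimpleGraph V) (S : Finset V) : Prop extends IsMinPDS G S where
  card_closedNbhd_le : ∀ T, IsMinPDS G T → (closedNbhd G T).card ≤ (closedNbhd G S).card

lemma IsMinPDS.card_le (hS : IsMinPDS G S) (hT : IsPDS G T) : S.card ≤ T.card :=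
  hS.card_eq ▸ Nat.sInf_le ⟨T, hT, rfl⟩

lemma IsMinPDS.card_le_of_exchange (hS : IsMinPDS G S) (hST : S \ W ⊆ T)
    (hW : ∀ w ∈ W, w ∈ closedNbhd G T ∧ (G.neighborFinset w \ closedNbhd G T).card ≤ 1) :
    S.card ≤ T.card :=
  hS.card_le (hS.isPDS.of_exchange hST hW)

variable (G) in
lemma exists_isMaxMinPDS : ∃ S, IsMaxMinPDS G S := by
  have hne : {k | ∃ S : Finset V, IsPDS G S ∧ S.card = k}.Nonempty :=
    ⟨_, univ, ⟨1, univ_subset_iff.1 (subset_closedNbhd univ)⟩, rfl⟩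
  obtain ⟨S₀, hS₀, hcard₀⟩ := Nat.sInf_mem hne
  obtain ⟨S, hS, hmax⟩ := exists_max_image (univ.filter (IsMinPDS G))
    (fun T => (closedNbhd G T).card) ⟨S₀, mem_filter.2 ⟨mem_univ _, hS₀, hcard₀⟩⟩
  exact ⟨S, (mem_filter.1 hS).2, fun T hT => hmax T (mem_filter.2 ⟨mem_univ _, hT⟩)⟩

/-- The external private neighbours of `v` with respect to `S`. -/
noncomputable def privNbrs (G : SimpleGraph V) (S : Finset V) (v : V) : Finset V :=
  G.neighborFinset v \ closedNbhd G (S.erase v)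

lemma privNbrs_subset_neighborFinset : privNbrs G S v ⊆ G.neighborFinset v :=
  sdiff_subset

lemma disjoint_closedNbhd_privNbrs (hv : v ∈ S) (hvu : v ≠ u) :
    Disjoint (closedNbhd G {v}) (privNbrs G S u) :=
  disjoint_of_subset_left (closedNbhd_singleton_subset (mem_erase.2 ⟨hvu, hv⟩)) disjoint_sdiff

lemma disjoint_neighborFinset_privNbrs (hv : v ∈ S) (hvu : v ≠ u) :
    Disjoint (G.neighborFinset v) (privNbrs G S u) :=
  disjoint_of_subset_left (closedNbhd_singleton v ▸ subset_insert _ _)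
    (disjoint_closedNbhd_privNbrs hv hvu)

lemma disjoint_privNbrs_self : Disjoint (privNbrs G S v) S := by
  refine disjoint_left.2 fun x hx hxS => (mem_sdiff.1 hx).2 (subset_closedNbhd _ ?_)
  exact mem_erase.2 ⟨(G.ne_of_adj ((G.mem_neighborFinset _ _).1 (mem_sdiff.1 hx).1)).symm, hxS⟩

lemma disjoint_neighborFinset_of_notMem_closedNbhd_erase
    (h : v ∉ closedNbhd G (S.erase v)) : Disjoint (G.neighborFinset v) S := by
  refine disjoint_left.2 fun x hx hxS =>
    h (mem_closedNbhd_of_adj ?_ ((G.mem_neighborFinset _ _).1 hx).symm)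
  exact mem_erase.2 ⟨(G.ne_of_adj ((G.mem_neighborFinset _ _).1 hx)).symm, hxS⟩

theorem card_add_sum_card_privNbrs_add_card_le {S' Y : Finset V} (hS' : S' ⊆ S)
    (hY : Y ⊆ closedNbhd G S) (hYS : Disjoint Y S)
    (hYpriv : ∀ v ∈ S', Disjoint Y (privNbrs G S v)) :
    S.card + ∑ v ∈ S', (privNbrs G S v).card + Y.card ≤ (closedNbhd G S).card := by
  set E := S'.biUnion (privNbrs G S)
  have hE : E.card = ∑ v ∈ S', (privNbrs G S v).card :=
    card_biUnion fun x hx y _ hxy => disjoint_of_subset_left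
      (privNbrs_subset_neighborFinset.trans (closedNbhd_singleton x ▸ subset_insert _ _))
      (disjoint_closedNbhd_privNbrs (hS' hx) hxy)
  have hSE : Disjoint S E := (disjoint_biUnion_right _ _ _).2 fun _ _ => disjoint_privNbrs_self.symm
  have hSEY : Disjoint (S ∪ E) Y :=
    disjoint_union_left.2 ⟨hYS.symm, (disjoint_biUnion_left _ _ _).2 fun v hv => (hYpriv v hv).symm⟩
  have hsub : S ∪ E ∪ Y ⊆ closedNbhd G S :=
    union_subset (union_subset (subset_closedNbhd S) (biUnion_subset.2 fun v hv =>
      privNbrs_subset_neighborFinset.trans (neighborFinset_subset_closedNbhd (hS' hv)))) hY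
  rw [← hE, ← card_union_of_disjoint hSE, ← card_union_of_disjoint hSEY]
  exact card_le_card hsub

lemma neighborFinset_sdiff_privNbrs_nonempty (h : (privNbrs G S v).card < G.degree v) :
    (G.neighborFinset v \ privNbrs G S v).Nonempty := by
  rw [← card_pos, card_sdiff_of_subset privNbrs_subset_neighborFinset,
    G.card_neighborFinset_eq_degree]
  omega

lemma IsMinPDS.two_le_card_privNbrs (hS : IsMinPDS G S) (hv : v ∈ S)
    (hvS : v ∈ closedNbhd G (S.erase v)) : 2 ≤ (privNbrs G S v).card := by
  by_contra! h
  have := hS.card_le_of_exchange (W := {v}) (T := S.erase v) (by simp [sdiff_singleton_eq_erase])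
    (by simpa using ⟨hvS, Nat.le_of_lt_succ h⟩)
  rw [card_erase_of_mem hv] at this
  have := card_pos.2 ⟨v, hv⟩
  omega

lemma IsMinPDS.notMem_closedNbhd_erase (hS : IsMinPDS G S) (hv : v ∈ S)
    (h : (privNbrs G S v).card ≤ 1) : v ∉ closedNbhd G (S.erase v) :=
  fun hvS => by have := hS.two_le_card_privNbrs hv hvS; omega

lemma IsMaxMinPDS.card_closedNbhd_sdiff_le_of_swap (hS : IsMaxMinPDS G S) (hv : v ∈ S)
    (hx : x ∉ S) (hT : IsPDS G (insert x (S.erase v))) :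
    (closedNbhd G {x} \ closedNbhd G (S.erase v)).card ≤
      (closedNbhd G {v} \ closedNbhd G (S.erase v)).card := by
  have := hS.card_closedNbhd_le _ ⟨hT, by
    rw [card_insert_of_notMem (fun h => hx (mem_of_mem_erase h)), card_erase_add_one hv,
      hS.card_eq]⟩
  rwa [closedNbhd_insert, closedNbhd_eq_union_erase hv, ← card_sdiff_add_card,
    ← card_sdiff_add_card, Nat.add_le_add_iff_right] at this

lemma IsMaxMinPDS.privNbrs_nonempty (hS : IsMaxMinPDS G S) (hv : v ∈ S)
    (hdeg : 0 < G.degree v) : (privNbrs G S v).Nonempty := by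
  rw [nonempty_iff_ne_empty]
  intro hempty
  set M := closedNbhd G (S.erase v)
  have hvM : v ∉ M := hS.notMem_closedNbhd_erase hv (by simp [hempty])
  have hNM : G.neighborFinset v ⊆ M := sdiff_eq_empty_iff_subset.1 hempty
  obtain ⟨u, hu⟩ := card_pos.1 hdeg
  have huv : G.Adj u v := ((G.mem_neighborFinset _ _).1 hu).symm
  have huS : u ∉ S := fun huS => hvM (mem_closedNbhd_of_adj
    (mem_erase.2 ⟨G.ne_of_adj huv, huS⟩) huv)
  have hT : IsPDS G (insert u (S.erase v)) := by
    refine hS.isPDS.of_exchange (W := {v}) (by simp [sdiff_singleton_eq_erase]) ?_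
    simp only [mem_singleton, forall_eq, closedNbhd_insert, mem_union]
    refine ⟨Or.inl (mem_closedNbhd_of_adj (mem_singleton_self u) huv), ?_⟩
    exact (card_eq_zero.2 (sdiff_eq_empty_iff_subset.2 (hNM.trans subset_union_right))).trans_le
      zero_le_one
  -- by maximality, `v` is the only neighbour of `u` outside `M`, so `S - v` is a PDS
  have hle := hS.card_closedNbhd_sdiff_le_of_swap hv huS hT
  rw [closedNbhd_singleton, closedNbhd_singleton, insert_sdiff_of_notMem _ hvM,
    sdiff_eq_empty_iff_subset.2 hNM, insert_empty, card_singleton] at hle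
  have hvN : v ∈ G.neighborFinset u \ M := mem_sdiff.2 ⟨(G.mem_neighborFinset _ _).2 huv, hvM⟩
  have huM : u ∈ M := by
    by_contra huM
    rw [insert_sdiff_of_notMem _ huM, card_insert_of_notMem (by simp)] at hle
    exact absurd (card_pos.2 ⟨v, hvN⟩) (by omega)
  rw [insert_sdiff_of_mem _ huM] at hle
  have := hS.card_le (hT.of_exchange (W := {u}) (T := S.erase v) (by simp)
    (by simpa using ⟨huM, hle⟩))
  rw [card_erase_of_mem hv] at this
  have := card_pos.2 ⟨v, hv⟩
  omega

/-- A vertex with at most one external private neighbour is isolated in `S` and has a neighbour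
that is not private to it. If these neighbours are at least as many as such vertices they account
for the missing third of `3 γ_p`; otherwise they replace those vertices in a smaller PDS. -/
theorem IsMaxMinPDS.three_mul_card_le (hS : IsMaxMinPDS G S) (hδ : 2 ≤ G.minDegree) :
    3 * S.card ≤ (closedNbhd G S).card := by
  have hdeg v : 2 ≤ G.degree v := hδ.trans (G.minDegree_le_degree v)
  set D := S.filter fun v => (privNbrs G S v).card ≤ 1 with hDdef
  have hD : ∀ v ∈ D, v ∈ S ∧ (privNbrs G S v).card ≤ 1 := fun v hv => mem_filter.1 hv
  have hDS : ∀ v ∈ D, Disjoint (G.neighborFinset v) S := fun v hv =>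
    disjoint_neighborFinset_of_notMem_closedNbhd_erase
      (hS.notMem_closedNbhd_erase (hD v hv).1 (hD v hv).2)
  set U := D.biUnion fun v => G.neighborFinset v \ privNbrs G S v
  by_cases hDU : D.card ≤ U.card
  · have hcount := card_add_sum_card_privNbrs_add_card_le (S' := S) (Y := U) Subset.rfl
      (biUnion_subset.2 fun v hv => sdiff_subset.trans
        (neighborFinset_subset_closedNbhd (hD v hv).1))
      ((disjoint_biUnion_left _ _ _).2 fun v hv => disjoint_of_subset_left sdiff_subset (hDS v hv))
      (fun u hu => (disjoint_biUnion_left _ _ _).2 fun v hv => by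
        rcases eq_or_ne v u with rfl | hvu
        · exact sdiff_disjoint
        · exact disjoint_of_subset_left sdiff_subset
            (disjoint_neighborFinset_privNbrs (hD v hv).1 hvu))
    have hsum : 2 * S.card ≤ ∑ v ∈ S, (privNbrs G S v).card + D.card := by
      have hsplit := sum_filter_add_sum_filter_not S (fun v => (privNbrs G S v).card ≤ 1)
        fun v => (privNbrs G S v).card
      have hcard := card_filter_add_card_filter_not (s := S) fun v => (privNbrs G S v).card ≤ 1
      rw [← hDdef] at hsplit hcard
      have h1 := card_nsmul_le_sum D (fun v => (privNbrs G S v).card) 1 fun v hv =>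
        card_pos.2 (hS.privNbrs_nonempty (hD v hv).1 (by have := hdeg v; omega))
      have h2 := card_nsmul_le_sum (S.filter fun v => ¬(privNbrs G S v).card ≤ 1)
        (fun v => (privNbrs G S v).card) 2 fun v hv => by have := (mem_filter.1 hv).2; omega
      simp only [smul_eq_mul] at h1 h2
      omega
    omega
  · have hle := hS.card_le_of_exchange (W := D) (T := (S \ D) ∪ U) subset_union_left
      fun w hw => by
        have hUT : U ⊆ closedNbhd G (S \ D ∪ U) := subset_union_right.trans (subset_closedNbhd _)
        have hwU : G.neighborFinset w \ privNbrs G S w ⊆ U :=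
          subset_biUnion_of_mem (fun v => G.neighborFinset v \ privNbrs G S v) hw
        obtain ⟨x, hx⟩ := neighborFinset_sdiff_privNbrs_nonempty
          (lt_of_le_of_lt (hD w hw).2 (hdeg w))
        refine ⟨mem_closedNbhd_of_adj (subset_union_right (hwU hx))
          ((G.mem_neighborFinset _ _).1 (mem_sdiff.1 hx).1).symm, ?_⟩
        refine (card_le_card fun z hz => ?_).trans (hD w hw).2
        by_contra hzp
        exact (mem_sdiff.1 hz).2 (hUT (hwU (mem_sdiff.2 ⟨(mem_sdiff.1 hz).1, hzp⟩)))
    have := card_union_le (S \ D) U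
    have := card_sdiff_add_card_inter S D
    rw [inter_eq_right.2 (filter_subset _ _), ← hDdef] at this
    omega

lemma card_add_sum_card_privNbrs_add_card_sdiff_le (hp : p ∈ S) :
    S.card + ∑ v ∈ S.erase p, (privNbrs G S v).card + (closedNbhd G {p} \ S).card ≤
      (closedNbhd G S).card :=
  card_add_sum_card_privNbrs_add_card_le (erase_subset p S)
    (sdiff_subset.trans (closedNbhd_singleton_subset hp)) sdiff_disjoint
    fun _ hv => disjoint_of_subset_left sdiff_subset
      (disjoint_closedNbhd_privNbrs hp (mem_erase.1 hv).1.symm)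

/-- If some vertex has at most one external private neighbour, counting around it shows that
all vertices of `S` are isolated in `S` with a single external private neighbour, and that the
other neighbours of each are adjacent to all the other vertices of `S`; then any two vertices
of `S` can be traded for one such neighbour. -/
theorem IsMaxMinPDS.two_mul_card_add_minDegree_le_of_card_privNbrs_le_one
    (hS : IsMaxMinPDS G S) (h3 : 3 ≤ S.card) (hδ : 2 ≤ G.minDegree) (hv : v ∈ S)
    (hv1 : (privNbrs G S v).card ≤ 1) : 2 * S.card + G.minDegree ≤ (closedNbhd G S).card := by
  by_contra! hlt
  have hdeg u : G.minDegree ≤ G.degree u := G.minDegree_le_degree u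
  have hpos : ∀ u ∈ S, 1 ≤ (privNbrs G S u).card := fun u hu =>
    card_pos.2 (hS.privNbrs_nonempty hu (by have := hdeg u; omega))
  have hiso : ∀ u ∈ S, (privNbrs G S u).card ≤ 1 → Disjoint (G.neighborFinset u) S :=
    fun u hu h => disjoint_neighborFinset_of_notMem_closedNbhd_erase
      (hS.notMem_closedNbhd_erase hu h)
  have hone : ∀ u ∈ S, (privNbrs G S u).card ≤ 1 := by
    intro u hu
    rcases eq_or_ne u v with rfl | huv
    · exact hv1
    have hcount := card_add_sum_card_privNbrs_add_card_le (erase_subset v S)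
      (neighborFinset_subset_closedNbhd hv) (hiso v hv hv1)
      fun y hy => disjoint_neighborFinset_privNbrs hv (mem_erase.1 hy).1.symm
    have hsum := add_card_sub_one_mul_le_sum (f := fun y => (privNbrs G S y).card)
      (fun y hy => hpos y (mem_of_mem_erase hy)) (mem_erase.2 ⟨huv, hu⟩)
    rw [card_erase_of_mem hv, G.card_neighborFinset_eq_degree] at *
    have := hdeg v
    omega
  have hcov : ∀ w ∈ S, ∀ y ∈ S, y ≠ w →
      G.neighborFinset y \ privNbrs G S y ⊆ G.neighborFinset w := by
    intro w hw y hy hyw z hz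
    by_contra hzw
    obtain ⟨hzy, hzp⟩ := mem_sdiff.1 hz
    have hcount := card_add_sum_card_privNbrs_add_card_le (Y := insert z (G.neighborFinset w))
      (erase_subset w S)
      (insert_subset (neighborFinset_subset_closedNbhd hy hzy)
        (neighborFinset_subset_closedNbhd hw))
      (disjoint_insert_left.2 ⟨disjoint_left.1 (hiso y hy (hone y hy)) hzy, hiso w hw (hone w hw)⟩)
      fun u hu => disjoint_insert_left.2 ⟨by
        rcases eq_or_ne y u with rfl | hyu
        · exact hzp
        · exact disjoint_left.1 (disjoint_neighborFinset_privNbrs hy hyu) hzy,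
        disjoint_neighborFinset_privNbrs hw (mem_erase.1 hu).1.symm⟩
    have hsum := card_nsmul_le_sum (S.erase w) (fun y => (privNbrs G S y).card) 1
      fun y hy => hpos y (mem_of_mem_erase hy)
    rw [card_insert_of_notMem hzw, G.card_neighborFinset_eq_degree, smul_eq_mul,
      card_erase_of_mem hw] at *
    have := hdeg w
    omega
  obtain ⟨w₁, hw₁, w₂, hw₂, w₃, hw₃, h12, h13, h23⟩ := two_lt_card.1 h3
  obtain ⟨u, hu⟩ := neighborFinset_sdiff_privNbrs_nonempty (G := G) (S := S) (v := w₃)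
    (by have := hone w₃ hw₃; have := hdeg w₃; omega)
  have hw₃T : w₃ ∈ insert u (S \ {w₁, w₂}) := by simp [hw₃, h13.symm, h23.symm]
  have hle := hS.card_le_of_exchange (W := {w₁, w₂}) (T := insert u (S \ {w₁, w₂}))
    (subset_insert _ _) fun y hy => by
      have hyS : y ∈ S := by rcases mem_insert.1 hy with rfl | hy <;> simp_all
      have hy3 : y ≠ w₃ := by rcases mem_insert.1 hy with rfl | hy <;> simp_all
      refine ⟨mem_closedNbhd_of_adj (mem_insert_self u _)
        ((G.mem_neighborFinset _ _).1 (hcov y hyS w₃ hw₃ hy3.symm hu)).symm, ?_⟩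
      refine (card_le_card fun z hz => ?_).trans (hone y hyS)
      by_contra hzp
      exact (mem_sdiff.1 hz).2 (mem_closedNbhd_of_adj hw₃T ((G.mem_neighborFinset _ _).1
        (hcov w₃ hw₃ y hyS hy3 (mem_sdiff.2 ⟨(mem_sdiff.1 hz).1, hzp⟩))))
  exact absurd (card_insert_sdiff_pair_lt hw₁ hw₂ h12 u) (not_lt.2 hle)

section Clique

variable (hclique : ∀ p ∈ S, S ⊆ closedNbhd G {p})
  (htwo : ∀ v ∈ S, (privNbrs G S v).card = 2)
  (hW : ∀ v ∈ S, G.neighborFinset v \ (S.erase v ∪ privNbrs G S v) = W)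

include hclique htwo hW in
lemma card_neighborFinset_sdiff_closedNbhd_le_one {z : V} (hz : z ∈ S)
    (hzT : z ∈ T) (hv : v ∈ S) (hx : x ∈ privNbrs G S v) (hxT : x ∈ closedNbhd G T) :
    (G.neighborFinset v \ closedNbhd G T).card ≤ 1 := by
  have hsub : G.neighborFinset v \ closedNbhd G T ⊆ (privNbrs G S v).erase x := by
    intro a ha
    obtain ⟨hav, haT⟩ := mem_sdiff.1 ha
    have haS : a ∉ S := fun haS => haT (closedNbhd_singleton_subset hzT (hclique z hz haS))
    refine mem_erase.2 ⟨fun hax => haT (hax ▸ hxT), ?_⟩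
    by_contra hap
    have haW : a ∈ W := hW v hv ▸ mem_sdiff.2 ⟨hav, by simp [haS, hap]⟩
    exact haT (neighborFinset_subset_closedNbhd hzT (mem_sdiff.1 (hW z hz ▸ haW)).1)
  simpa [card_erase_of_mem hx, htwo v hv] using card_le_card hsub

include hclique htwo hW in
lemma IsMinPDS.disjoint_neighborFinset_privNbrs_of_mem_privNbrs (hS : IsMinPDS G S)
    (h3 : 3 ≤ S.card) (hv : v ∈ S) (hx : x ∈ privNbrs G S v) (hw : w ∈ S) (hwv : w ≠ v) :
    Disjoint (G.neighborFinset x) (privNbrs G S w) := by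
  refine disjoint_left.2 fun y hyx hyw => ?_
  obtain ⟨z, hz⟩ : (S \ {v, w}).Nonempty := by
    rw [← card_pos, card_sdiff_of_subset (insert_subset hv (singleton_subset_iff.2 hw)),
      card_pair hwv.symm]
    omega
  have hzS := (mem_sdiff.1 hz).1
  have hzT : z ∈ insert x (S \ {v, w}) := mem_insert_of_mem hz
  have hxT : x ∈ closedNbhd G (insert x (S \ {v, w})) :=
    subset_closedNbhd _ (mem_insert_self x _)
  have hle := hS.card_le_of_exchange (W := {v, w}) (subset_insert _ _) fun a ha => by
    have haS : a ∈ S := by rcases mem_insert.1 ha with rfl | ha <;> simp_all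
    refine ⟨closedNbhd_singleton_subset hzT (hclique z hzS haS), ?_⟩
    rcases mem_insert.1 ha with rfl | ha
    · exact card_neighborFinset_sdiff_closedNbhd_le_one hclique htwo hW hzS hzT haS hx hxT
    · rw [mem_singleton.1 ha]
      exact card_neighborFinset_sdiff_closedNbhd_le_one hclique htwo hW hzS hzT hw hyw
        (neighborFinset_subset_closedNbhd (mem_insert_self x _) hyx)
  exact absurd (card_insert_sdiff_pair_lt hv hw hwv.symm x) (not_lt.2 hle)

include hclique htwo hW in
lemma IsMaxMinPDS.card_neighborFinset_sdiff_closedNbhd_erase_le_one (hS : IsMaxMinPDS G S)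
    (hv : v ∈ S) (hw : w ∈ S) (hwv : w ≠ v) (hx : x ∈ privNbrs G S v) :
    (G.neighborFinset x \ closedNbhd G (S.erase v)).card ≤ 1 := by
  have hwT : w ∈ insert x (S.erase v) := mem_insert_of_mem (mem_erase.2 ⟨hwv, hw⟩)
  have hvM : v ∈ closedNbhd G (S.erase v) :=
    closedNbhd_singleton_subset (mem_erase.2 ⟨hwv, hw⟩) (hclique w hw hv)
  have hT : IsPDS G (insert x (S.erase v)) :=
    hS.isPDS.of_exchange (W := {v}) (by simp [sdiff_singleton_eq_erase]) (by
      simpa using ⟨closedNbhd_singleton_subset hwT (hclique w hw hv),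
        card_neighborFinset_sdiff_closedNbhd_le_one hclique htwo hW hw hwT hv hx
          (subset_closedNbhd _ (mem_insert_self x _))⟩)
  have hle := hS.card_closedNbhd_sdiff_le_of_swap hv
    (disjoint_left.1 disjoint_privNbrs_self hx) hT
  rw [closedNbhd_singleton, closedNbhd_singleton, insert_sdiff_of_notMem _ (mem_sdiff.1 hx).2,
    insert_sdiff_of_mem _ hvM, card_insert_of_notMem (by simp)] at hle
  have := htwo v hv
  unfold privNbrs at this
  omega

include hW in
lemma neighborFinset_inter_closedNbhd_erase_subset (hx : x ∈ privNbrs G S v)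
    (hdisj : ∀ w ∈ S, w ≠ v → Disjoint (G.neighborFinset x) (privNbrs G S w)) :
    G.neighborFinset x ∩ closedNbhd G (S.erase v) ⊆ insert v W := by
  intro a ha
  obtain ⟨hax, haM⟩ := mem_inter.1 ha
  have hxa : G.Adj x a := (G.mem_neighborFinset _ _).1 hax
  have haE : a ∉ S.erase v := fun haE => (mem_sdiff.1 hx).2 (mem_closedNbhd_of_adj haE hxa.symm)
  rcases mem_closedNbhd.1 haM with haE' | ⟨w, hw, hwa⟩
  · exact absurd haE' haE
  by_cases haS : a ∈ S
  · exact mem_insert.2 (Or.inl (by by_contra hav; exact haE (mem_erase.2 ⟨hav, haS⟩)))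
  obtain ⟨hwv, hwS⟩ := mem_erase.1 hw
  refine mem_insert_of_mem (hW w hwS ▸ mem_sdiff.2 ⟨(G.mem_neighborFinset _ _).2 hwa, ?_⟩)
  simp only [mem_union, mem_erase, not_or, not_and]
  exact ⟨fun _ => haS, disjoint_left.1 (hdisj w hwS hwv) hax⟩

include hclique htwo hW in
/-- An external private neighbour `x` of `v` can replace `v`, so by maximality it has at most
one neighbour outside `N[S - v]`; its neighbours inside are `v` and vertices of `W`. -/
theorem IsMaxMinPDS.minDegree_le_card_add_two (hS : IsMaxMinPDS G S) (h3 : 3 ≤ S.card) :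
    G.minDegree ≤ W.card + 2 := by
  obtain ⟨v, hv, w, hw, -, -, hvw, -, -⟩ := two_lt_card.1 h3
  obtain ⟨x, hx⟩ := card_pos.1 (by rw [htwo v hv]; omega : 0 < (privNbrs G S v).card)
  have hout := hS.card_neighborFinset_sdiff_closedNbhd_erase_le_one hclique htwo hW hv hw
    hvw.symm hx
  have hin := card_le_card (neighborFinset_inter_closedNbhd_erase_subset hW hx
    fun w hw hwv =>
      hS.disjoint_neighborFinset_privNbrs_of_mem_privNbrs hclique htwo hW h3 hv hx hw hwv)
  have := card_sdiff_add_card_inter (G.neighborFinset x) (closedNbhd G (S.erase v))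
  have := card_insert_le v W
  have := G.minDegree_le_degree x
  rw [← G.card_neighborFinset_eq_degree] at *
  omega

end Clique

/-- Counting around each vertex `p ∈ S` shows that `S` would be a clique whose vertices have
exactly two external private neighbours each and share all their remaining neighbours. -/
theorem IsMaxMinPDS.two_mul_card_add_minDegree_le_of_two_le_card_privNbrs
    (hS : IsMaxMinPDS G S) (h3 : 3 ≤ S.card) (h2 : ∀ v ∈ S, 2 ≤ (privNbrs G S v).card) :
    2 * S.card + G.minDegree ≤ (closedNbhd G S).card := by
  by_contra! hlt
  have hcount p (hp : p ∈ S) : S.card + ∑ v ∈ S.erase p, (privNbrs G S v).card +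
      (G.degree p + 1) ≤ (closedNbhd G S).card + (closedNbhd G {p} ∩ S).card := by
    have := card_add_sum_card_privNbrs_add_card_sdiff_le (G := G) hp
    have := card_sdiff_add_card_inter (closedNbhd G {p}) S
    rw [card_closedNbhd_singleton] at this
    omega
  have hsum p (hp : p ∈ S) : 2 * (S.card - 1) ≤ ∑ v ∈ S.erase p, (privNbrs G S v).card := by
    have := card_nsmul_le_sum (S.erase p) (fun v => (privNbrs G S v).card) 2
      fun v hv => h2 v (mem_of_mem_erase hv)
    rwa [smul_eq_mul, card_erase_of_mem hp, mul_comm] at this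
  have hclique : ∀ p ∈ S, S ⊆ closedNbhd G {p} := by
    intro p hp q hq
    by_contra hqp
    have := card_le_card fun a (ha : a ∈ closedNbhd G {p} ∩ S) =>
      mem_erase.2 ⟨fun h => hqp (h ▸ (mem_inter.1 ha).1 :), (mem_inter.1 ha).2⟩
    rw [card_erase_of_mem hq] at this
    have := hcount p hp
    have := hsum p hp
    have := G.minDegree_le_degree p
    omega
  have htwo : ∀ v ∈ S, (privNbrs G S v).card = 2 := by
    intro v hv
    obtain ⟨p, hp, hpv⟩ := exists_mem_ne (by omega : 1 < S.card) v
    have := add_card_sub_one_mul_le_sum (f := fun v => (privNbrs G S v).card)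
      (fun u hu => h2 u (mem_of_mem_erase hu)) (mem_erase.2 ⟨hpv.symm, hv⟩)
    rw [card_erase_of_mem hp] at this
    have := card_le_card (inter_subset_right : closedNbhd G {p} ∩ S ⊆ S)
    have := hcount p hp
    have := G.minDegree_le_degree p
    have := h2 v hv
    omega
  set W := S.biUnion fun v => G.neighborFinset v \ (S.erase v ∪ privNbrs G S v)
  have hWcard : W.card + S.card < G.minDegree := by
    have := card_add_sum_card_privNbrs_add_card_le (S' := S) (Y := W) Subset.rfl
      (biUnion_subset.2 fun v hv => sdiff_subset.trans (neighborFinset_subset_closedNbhd hv))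
      ((disjoint_biUnion_left _ _ _).2 fun v _ => disjoint_left.2 fun a ha haS =>
        (mem_sdiff.1 ha).2 (mem_union_left _ (mem_erase.2
          ⟨(G.ne_of_adj ((G.mem_neighborFinset _ _).1 (mem_sdiff.1 ha).1)).symm, haS⟩)))
      fun u _ => (disjoint_biUnion_left _ _ _).2 fun v hv => by
        rcases eq_or_ne v u with rfl | hvu
        · exact disjoint_left.2 fun a ha hap => (mem_sdiff.1 ha).2 (mem_union_right _ hap)
        · exact disjoint_of_subset_left sdiff_subset (disjoint_neighborFinset_privNbrs hv hvu)
    rw [sum_congr rfl htwo, sum_const, smul_eq_mul] at this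
    omega
  have hW : ∀ v ∈ S, G.neighborFinset v \ (S.erase v ∪ privNbrs G S v) = W := fun v hv =>
    eq_of_subset_of_card_le
      (subset_biUnion_of_mem (fun v => G.neighborFinset v \ (S.erase v ∪ privNbrs G S v)) hv) (by
      have := le_card_sdiff (S.erase v ∪ privNbrs G S v) (G.neighborFinset v)
      have := card_union_le (S.erase v) (privNbrs G S v)
      rw [card_erase_of_mem hv, htwo v hv, G.card_neighborFinset_eq_degree] at *
      have := G.minDegree_le_degree v
      omega)
  have := hS.minDegree_le_card_add_two hclique htwo hW h3
  omega

theorem IsMaxMinPDS.two_mul_card_add_minDegree_le (hS : IsMaxMinPDS G S) (h3 : 3 ≤ S.card)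
    (hδ : 2 ≤ G.minDegree) : 2 * S.card + G.minDegree ≤ (closedNbhd G S).card := by
  by_cases h : ∀ v ∈ S, 2 ≤ (privNbrs G S v).card
  · exact hS.two_mul_card_add_minDegree_le_of_two_le_card_privNbrs h3 h
  · push Not at h
    obtain ⟨v, hv, hv1⟩ := h
    exact hS.two_mul_card_add_minDegree_le_of_card_privNbrs_le_one h3 hδ hv (by omega)

end

theorem stmt_12_general {V : Type*} [Fintype V] (G : SimpleGraph V) (n : ℕ)
    (hn : Fintype.card V = n)
    (hdelta : 2 ≤ G.minDegree) (hgamma : 3 ≤ pdNum G) :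
    pdRad G ≤ n - pdNum G - max (2 * pdNum G) (pdNum G + G.minDegree) + 1 := by
  obtain ⟨S, hS⟩ := exists_isMaxMinPDS G
  have h3γ := hS.three_mul_card_le hdelta
  have h2γδ := hS.two_mul_card_add_minDegree_le (hS.card_eq ▸ hgamma) hdelta
  have hrad := (pdRad_le_pdRadS hS.isPDS hS.card_eq).trans hS.isPDS.pdRadS_le
  rw [← hS.card_eq]
  omega

theorem stmt_12 {V : Type*} [Fintype V] (G : SimpleGraph V) (n : ℕ)
    (hn : Fintype.card V = n) (hconn : G.Connected)
    (hdelta : 2 ≤ G.minDegree) (hgamma : 3 ≤ pdNum G) :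
    pdRad G ≤ n - pdNum G - max (2 * pdNum G) (pdNum G + G.minDegree) + 1 :=
  stmt_12_general G n hn hdelta hgamma
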